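/- Bäcklund transformation of the potentials: let D ⊆ ℂ be open and connected with 0 ∉ D, Θ∞ ∈ ℂ, and let y, v, s, t : D → ℂ be differentiable (analytic) functions satisfying on D the system x·y' = −2x·s + Θ∞·y, x·v' = −2x·t·(s·t − x) − Θ∞·v, x·s' = (1 − Θ∞)·s − 2x·y + 4·y·s·t, x·t' = Θ∞·t − 2·y·t² + 2·v, and suppose the expression x² + y(x)²t(x)² − Θ∞·y(x)t(x) − v(x)y(x) is nonvanishing on D. Define v̂(x) := −i·x·t(x); ŷ(x) := (i/x)·(x·s(x) − (Θ∞ − 1)·y(x) + y(x)²·t(x)); ŝ(x) := (i·y(x)/x²)·(x² + y(x)²t(x)² − Θ∞·y(x)t(x) − v(x)y(x)); t̂(x) := i·x·(y(x)t(x)² − Θ∞·t(x) − v(x)) / (x² + y(x)²t(x)² − Θ∞·y(x)t(x) − v(x)y(x)). Then (ŷ, v̂, ŝ, t̂) satisfies the same system on D with Θ∞ replaced by Θ∞ − 1. -/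

import Mathlib

open Complex

/-- The Painlevé-III potential system with parameter `Θinf` on the set `D`:
`y, v, s, t` are differentiable at every point of `D` and satisfy the coupled
first-order ODEs there. -/
def PIIIPotentialSystem (Θinf : ℂ) (D : Set ℂ) (y v s t : ℂ → ℂ) : Prop :=
  ∀ x ∈ D,
    DifferentiableAt ℂ y x ∧ DifferentiableAt ℂ v x ∧
    DifferentiableAt ℂ s x ∧ DifferentiableAt ℂ t x ∧
    x * deriv y x = -2 * x * s x + Θinf * y x ∧
    x * deriv v x = -2 * x * t x * (s x * t x - x) - Θinf * v x ∧
    x * deriv s x = (1 - Θinf) * s x - 2 * x * y x + 4 * y x * s x * t x ∧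
    x * deriv t x = Θinf * t x - 2 * y x * (t x) ^ 2 + 2 * v x

set_option maxHeartbeats 4000000 in
/-- Bäcklund transformation of the potentials: if `(y, v, s, t)` solves the
Painlevé-III potential system with parameter `Θinf` on `D` and
`x² + y²t² − Θinf·y·t − v·y` is nonvanishing on `D`, then
`(ŷ, v̂, ŝ, t̂)` solves the same system with parameter `Θinf − 1`. -/
theorem potential_backlund_transformation (D : Set ℂ) (hD : IsOpen D)
    (hconn : IsConnected D) (h0 : (0 : ℂ) ∉ D) (Θinf : ℂ) (y v s t : ℂ → ℂ)
    (hsys : PIIIPotentialSystem Θinf D y v s t)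
    (hden : ∀ x ∈ D,
      x ^ 2 + (y x) ^ 2 * (t x) ^ 2 - Θinf * y x * t x - v x * y x ≠ 0) :
    PIIIPotentialSystem (Θinf - 1) D
      (fun x => (Complex.I / x) * (x * s x - (Θinf - 1) * y x + (y x) ^ 2 * t x))
      (fun x => -Complex.I * x * t x)
      (fun x => (Complex.I * y x / x ^ 2) *
        (x ^ 2 + (y x) ^ 2 * (t x) ^ 2 - Θinf * y x * t x - v x * y x))
      (fun x => Complex.I * x * (y x * (t x) ^ 2 - Θinf * t x - v x) /
        (x ^ 2 + (y x) ^ 2 * (t x) ^ 2 - Θinf * y x * t x - v x * y x)) := by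
  intro x hx
  obtain ⟨hy, hv, hs, ht, ey, ev, es, et⟩ := hsys x hx
  have hx0 : x ≠ 0 := fun h => h0 (h ▸ hx)
  have hd : x ^ 2 + (y x) ^ 2 * (t x) ^ 2 - Θinf * y x * t x - v x * y x ≠ 0 :=
    hden x hx
  have hd' : x ^ 2 + (y x) ^ 2 * (t x) ^ 2 - Θinf * y x * t x - y x * v x ≠ 0 := by
    rw [mul_comm (y x) (v x)]; exact hd
  have hd2 : x ^ 2 + t x ^ 2 * y x ^ 2 - t x * Θinf * y x - y x * v x ≠ 0 :=
    fun h => hd (by linear_combination h)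
  have hd3 : x ^ 2 + y x ^ 2 * t x ^ 2 - y x * t x * Θinf - y x * v x ≠ 0 :=
    fun h => hd (by linear_combination h)
  have hI2 : Complex.I ^ 2 = -1 := Complex.I_sq
  have hI3 : Complex.I ^ 3 = -Complex.I := by
    rw [pow_succ, Complex.I_sq]; ring
  have hI4 : Complex.I ^ 4 = 1 := by
    rw [show (4:ℕ)=2+2 from rfl, pow_add, Complex.I_sq]; ring
  have Hy : HasDerivAt y (deriv y x) x := hy.hasDerivAt
  have Hv : HasDerivAt v (deriv v x) x := hv.hasDerivAt
  have Hs : HasDerivAt s (deriv s x) x := hs.hasDerivAt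
  have Ht : HasDerivAt t (deriv t x) x := ht.hasDerivAt
  -- derivative values from the ODEs
  have Dy : deriv y x = (-2 * x * s x + Θinf * y x) / x :=
    (eq_div_iff hx0).mpr (by linear_combination ey)
  have Dv : deriv v x = (-2 * x * t x * (s x * t x - x) - Θinf * v x) / x :=
    (eq_div_iff hx0).mpr (by linear_combination ev)
  have Ds : deriv s x = ((1 - Θinf) * s x - 2 * x * y x + 4 * y x * s x * t x) / x :=
    (eq_div_iff hx0).mpr (by linear_combination es)
  have Dt : deriv t x = (Θinf * t x - 2 * y x * (t x) ^ 2 + 2 * v x) / x :=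
    (eq_div_iff hx0).mpr (by linear_combination et)
  -- ŷ
  have Hinv : HasDerivAt (fun z : ℂ => Complex.I / z) (Complex.I * -(x ^ 2)⁻¹) x := by
    simpa [div_eq_mul_inv] using (hasDerivAt_inv hx0).const_mul Complex.I
  have Hg : HasDerivAt (fun z => z * s z - (Θinf - 1) * y z + (y z) ^ 2 * t z)
      ((1 * s x + x * deriv s x - (Θinf - 1) * deriv y x) +
        ((↑2 * y x ^ (2 - 1) * deriv y x) * t x + y x ^ 2 * deriv t x)) x :=
    (((hasDerivAt_id x).mul Hs).sub (Hy.const_mul (Θinf - 1))).add ((Hy.pow 2).mul Ht)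
  have Hyh := Hinv.mul Hg
  -- v̂
  have Hvh := ((hasDerivAt_id x).const_mul (-Complex.I)).mul Ht
  -- denominator d
  have Hp2 : HasDerivAt (fun z : ℂ => z ^ 2) (↑2 * x ^ (2 - 1)) x := hasDerivAt_pow 2 x
  have Hd : HasDerivAt
      (fun z => z ^ 2 + (y z) ^ 2 * (t z) ^ 2 - Θinf * y z * t z - v z * y z)
      ((↑2 * x ^ (2 - 1) + ((↑2 * y x ^ (2 - 1) * deriv y x) * (t x) ^ 2 +
          (y x) ^ 2 * (↑2 * t x ^ (2 - 1) * deriv t x)) -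
        ((Θinf * deriv y x) * t x + Θinf * y x * deriv t x)) -
        (deriv v x * y x + v x * deriv y x)) x :=
    ((Hp2.add ((Hy.pow 2).mul (Ht.pow 2))).sub ((Hy.const_mul Θinf).mul Ht)).sub (Hv.mul Hy)
  -- ŝ
  have Hsh := ((Hy.const_mul Complex.I).div Hp2 (pow_ne_zero 2 hx0)).mul Hd
  -- t̂
  have Hn : HasDerivAt (fun z => y z * (t z) ^ 2 - Θinf * t z - v z)
      ((deriv y x * (t x) ^ 2 + y x * (↑2 * t x ^ (2 - 1) * deriv t x) -
        Θinf * deriv t x) - deriv v x) x :=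
    ((Hy.mul (Ht.pow 2)).sub (Ht.const_mul Θinf)).sub Hv
  have Hth := (((hasDerivAt_id x).const_mul Complex.I).mul Hn).div Hd hd
  simp only [id_eq] at Hvh Hth
  simp only [Pi.mul_def, Pi.div_def] at Hyh Hvh Hsh Hth
  refine ⟨Hyh.differentiableAt, Hvh.differentiableAt, Hsh.differentiableAt,
    Hth.differentiableAt, ?_, ?_, ?_, ?_⟩
  · rw [Hyh.deriv]
    simp only
    simp only [Dy, Dv, Ds, Dt]
    field_simp
    ring
  · rw [Hvh.deriv]
    simp only
    simp only [Dy, Dv, Ds, Dt]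
    field_simp [hd, hd', hd2, hd3]
    ring_nf
    simp only [hI2, hI3, hI4]
    ring
  · rw [Hsh.deriv]
    simp only
    simp only [Dy, Dv, Ds, Dt]
    field_simp [hd, hd', hd2, hd3]
    ring_nf
    simp only [hI2, hI3, hI4]
    ring
  · rw [Hth.deriv]
    simp only
    simp only [Dy, Dv, Ds, Dt]
    field_simp [hd, hd', hd2, hd3]
    ring_nf
    simp only [hI2, hI3, hI4]
    ring
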